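/- arXiv:1302.3531 — 4 statements merged into one kernel-verified Lean document; each statement's English description precedes it below -/
import Mathlib

section
/- For every e ∈ (0,1) there exists a constant c > 0 (depending only on e) such that every graphon g with edge density e(g) = e satisfies I(g) - I₀(e) ≥ c·|t(g) - e³|. Consequently, among graphons of fixed edge density e, the rate function is minimized (i.e. -I is maximized) exactly when the triangle density equals e³, and the minimum value I₀(e) is approached at most linearly in |t(g) - e³|. -/
open MeasureTheory Set

/-- `I₀(u) = (1/2)[u ln u + (1-u) ln(1-u)]`; since `Real.log 0 = 0`,
this automatically satisfies the continuous extension `I₀(0) = I₀(1) = 0`. -/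
noncomputable def I0 (u : ℝ) : ℝ :=
  (1/2) * (u * Real.log u + (1 - u) * Real.log (1 - u))

/-- A graphon: a measurable function `[0,1]² → [0,1]`, symmetric on `[0,1]²`. -/
def IsGraphon (g : ℝ → ℝ → ℝ) : Prop :=
  Measurable (Function.uncurry g) ∧
  (∀ x ∈ Icc (0:ℝ) 1, ∀ y ∈ Icc (0:ℝ) 1, g x y = g y x) ∧
  (∀ x ∈ Icc (0:ℝ) 1, ∀ y ∈ Icc (0:ℝ) 1, g x y ∈ Icc (0:ℝ) 1)

/-- Edge density `e(g) = ∫∫ g`. -/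
noncomputable def edgeDensity (g : ℝ → ℝ → ℝ) : ℝ :=
  ∫ x in Icc (0:ℝ) 1, ∫ y in Icc (0:ℝ) 1, g x y

/-- Triangle density `t(g) = ∫∫∫ g(x,y) g(y,z) g(z,x)`. -/
noncomputable def triangleDensity (g : ℝ → ℝ → ℝ) : ℝ :=
  ∫ x in Icc (0:ℝ) 1, ∫ y in Icc (0:ℝ) 1, ∫ z in Icc (0:ℝ) 1,
    g x y * g y z * g z x

/-- Rate function `I(g) = ∫∫ I₀(g(x,y))`. -/
noncomputable def rateFn (g : ℝ → ℝ → ℝ) : ℝ :=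
  ∫ x in Icc (0:ℝ) 1, ∫ y in Icc (0:ℝ) 1, I0 (g x y)

/-!
Since `I₀ = -H/2` for the binary entropy `H`, and `H'' = -1/(u(1-u)) ≤ -4` on `(0,1)`, `I₀` lies
above its tangent at `e` plus `(u - e)²`. Integrated against a graphon `g` of edge
density `e`, the linear term vanishes, so `I(g) - I₀(e) ≥ ‖g - e‖₂²`.

Writing `g = e + h` in `t(g) = ∫ g(x,y) g(y,z) g(z,x)`, the terms linear in `h` again integrate to
zero, and the remaining ones are bounded pointwise by `2 (h(x,y)² + h(y,z)² + h(z,x)²)`. Each of the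
three edges `(x,y)`, `(y,z)`, `(z,x)` of `[0,1]³` is uniformly distributed on `[0,1]²`, so
`|t(g) - e³| ≤ 6 ‖g - e‖₂²`, and `c = 1/6` works.
-/

open Real

lemma ConvexOn.add_deriv_mul_sub_le {S : Set ℝ} {f : ℝ → ℝ} {x y f' : ℝ}
    (hf : ConvexOn ℝ S f) (hx : x ∈ S) (hy : y ∈ S) (hd : HasDerivAt f f' x) :
    f x + f' * (y - x) ≤ f y := by
  rcases lt_trichotomy y x with hyx | rfl | hxy
  · have h := hf.slope_le_of_hasDerivAt hy hx hyx hd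
    rw [slope_def_field, div_le_iff₀ (sub_pos.2 hyx)] at h
    linarith
  · simp
  · have h := hf.le_slope_of_hasDerivAt hx hy hxy hd
    rw [slope_def_field, le_div_iff₀ (sub_pos.2 hxy)] at h
    linarith

lemma hasDerivAt_neg_binEntropy_sub_two_mul_sq {u : ℝ} (hu : u ∈ Ioo 0 1) :
    HasDerivAt (fun v => -binEntropy v - 2 * v ^ 2) (log u - log (1 - u) - 4 * u) u :=
  ((hasDerivAt_binEntropy hu.1.ne' hu.2.ne).neg.sub
    ((hasDerivAt_pow 2 u).const_mul 2)).congr_deriv (by norm_num; ring)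

lemma convexOn_neg_binEntropy_sub_two_mul_sq :
    ConvexOn ℝ (Icc 0 1) (fun u => -binEntropy u - 2 * u ^ 2) := by
  refine convexOn_of_hasDerivWithinAt2_nonneg (convex_Icc 0 1) (by fun_prop)
    (f' := fun u => log u - log (1 - u) - 4 * u) (f'' := fun u => u⁻¹ + (1 - u)⁻¹ - 4)
    ?_ ?_ ?_ <;> rw [interior_Icc] <;> intro u hu
  · exact (hasDerivAt_neg_binEntropy_sub_two_mul_sq hu).hasDerivWithinAt
  · have hlog₁ := ((hasDerivAt_id u).const_sub 1).log (sub_pos.2 hu.2).ne'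
    exact (((hasDerivAt_log hu.1.ne').sub hlog₁).sub
      ((hasDerivAt_id u).const_mul 4)).hasDerivWithinAt.congr_deriv (by simp [div_eq_mul_inv])
  · have hu₁ := sub_pos.2 hu.2
    have h : u⁻¹ + (1 - u)⁻¹ - 4 = (1 - 2 * u) ^ 2 / (u * (1 - u)) := by
      field_simp [hu.1.ne', hu₁.ne']
      ring
    rw [h]
    have hu₀ := hu.1
    positivity

lemma binEntropy_le_tangent_sub_two_mul_sq {e u : ℝ} (he : e ∈ Ioo 0 1) (hu : u ∈ Icc 0 1) :
    binEntropy u ≤ binEntropy e + (log (1 - e) - log e) * (u - e) - 2 * (u - e) ^ 2 := by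
  have h := convexOn_neg_binEntropy_sub_two_mul_sq.add_deriv_mul_sub_le
    (Ioo_subset_Icc_self he) hu (hasDerivAt_neg_binEntropy_sub_two_mul_sq he)
  linarith

lemma I0_eq_neg_binEntropy_div_two (u : ℝ) : I0 u = -binEntropy u / 2 := by
  simp only [I0, binEntropy, log_inv]
  ring

lemma sub_sq_mem_Icc {u e : ℝ} (hu : u ∈ Icc (0:ℝ) 1) (he : e ∈ Icc (0:ℝ) 1) :
    (u - e) ^ 2 ∈ Icc (0:ℝ) 1 :=
  ⟨sq_nonneg _, by nlinarith [hu.1, hu.2, he.1, he.2]⟩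

lemma abs_mul_mul_sub_cube_le {e u v w : ℝ} (he : e ∈ Icc (0:ℝ) 1)
    (hw : w ∈ Icc (0:ℝ) 1) :
    |u * v * w - e ^ 3 - e ^ 2 * ((u - e) + (v - e) + (w - e))|
      ≤ 2 * ((u - e) ^ 2 + (v - e) ^ 2 + (w - e) ^ 2) := by
  obtain ⟨a, rfl⟩ : ∃ a, u = e + a := ⟨u - e, by ring⟩
  obtain ⟨b, rfl⟩ : ∃ b, v = e + b := ⟨v - e, by ring⟩
  obtain ⟨c, rfl⟩ : ∃ c, w = e + c := ⟨w - e, by ring⟩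
  simp only [add_sub_cancel_left]
  have hc : |c| ≤ 1 := abs_le.2 ⟨by linarith [hw.1, he.2], by linarith [hw.2, he.1]⟩
  have two_mul_abs_mul_le (x y : ℝ) : 2 * |x * y| ≤ x ^ 2 + y ^ 2 := by
    rw [abs_mul]; nlinarith [sq_nonneg (|x| - |y|), sq_abs x, sq_abs y]
  calc |(e + a) * (e + b) * (e + c) - e ^ 3 - e ^ 2 * (a + b + c)|
      = |e * (a * b + b * c + c * a) + a * b * c| := by ring_nf
    _ ≤ e * |a * b + b * c + c * a| + |a * b| * |c| := by
        grw [abs_add_le, abs_mul, abs_of_nonneg he.1, abs_mul (a * b)]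
    _ ≤ |a * b| + |b * c| + |c * a| + |a * b| := by
        grw [mul_le_of_le_one_left (abs_nonneg _) he.2, abs_add_three,
          mul_le_of_le_one_right (abs_nonneg _) hc]
    _ ≤ 2 * (a ^ 2 + b ^ 2 + c ^ 2) := by
        linarith [two_mul_abs_mul_le a b, two_mul_abs_mul_le b c, two_mul_abs_mul_le c a,
          sq_nonneg a, sq_nonneg b, sq_nonneg c]

lemma MeasureTheory.MeasurePreserving.integral_comp_of_aestronglyMeasurable {α β E : Type*}
    [MeasurableSpace α] [MeasurableSpace β] [NormedAddCommGroup E] [NormedSpace ℝ E]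
    {μ : Measure α} {ν : Measure β} {f : α → β} (hf : MeasurePreserving f μ ν)
    {g : β → E} (hg : AEStronglyMeasurable g ν) : ∫ x, g (f x) ∂μ = ∫ y, g y ∂ν := by
  rw [← hf.map_eq] at hg ⊢
  exact (integral_map hf.measurable.aemeasurable hg).symm

lemma integral_prod_prod {α β γ E : Type*} [MeasurableSpace α] [MeasurableSpace β]
    [MeasurableSpace γ] [NormedAddCommGroup E] [NormedSpace ℝ E]
    {μ : Measure α} {ν : Measure β} {ρ : Measure γ} [SFinite μ] [SFinite ν] [SFinite ρ]
    {F : α × β × γ → E} (hF : Integrable F (μ.prod (ν.prod ρ))) :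
    ∫ q, F q ∂μ.prod (ν.prod ρ) = ∫ x, ∫ y, ∫ z, F (x, y, z) ∂ρ ∂ν ∂μ := by
  rw [integral_prod F hF]
  refine integral_congr_ae ?_
  filter_upwards [hF.prod_right_ae] with x hx using integral_prod _ hx

section ProbabilitySpace

variable {Ω : Type*} [MeasurableSpace Ω] {ν : Measure Ω}

lemma integrable_binEntropy_comp [IsFiniteMeasure ν] {f : Ω → ℝ} (hf : AEMeasurable f ν)
    (hf01 : ∀ᵐ ω ∂ν, f ω ∈ Icc 0 1) : Integrable (fun ω => binEntropy (f ω)) ν :=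
  .of_mem_Icc 0 (log 2) (binEntropy_continuous.measurable.comp_aemeasurable hf) <|
    hf01.mono fun _ h => ⟨binEntropy_nonneg h.1 h.2, binEntropy_le_log_two⟩

variable [IsProbabilityMeasure ν]

lemma integral_binEntropy_le {f : Ω → ℝ} {e : ℝ} (hf : AEMeasurable f ν)
    (hf01 : ∀ᵐ ω ∂ν, f ω ∈ Icc 0 1) (he : e ∈ Ioo 0 1) (hmean : ∫ ω, f ω ∂ν = e) :
    ∫ ω, binEntropy (f ω) ∂ν ≤ binEntropy e - 2 * ∫ ω, (f ω - e) ^ 2 ∂ν := by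
  have hfi : Integrable f ν := .of_mem_Icc 0 1 hf hf01
  have hsq : Integrable (fun ω => (f ω - e) ^ 2) ν := .of_mem_Icc 0 1 (by fun_prop) <|
    hf01.mono fun ω h => sub_sq_mem_Icc h (Ioo_subset_Icc_self he)
  set L := log (1 - e) - log e
  calc ∫ ω, binEntropy (f ω) ∂ν
      ≤ ∫ ω, (binEntropy e + L * (f ω - e) - 2 * (f ω - e) ^ 2) ∂ν :=
        integral_mono_ae (integrable_binEntropy_comp hf hf01) (by fun_prop) <|
          hf01.mono fun ω h => binEntropy_le_tangent_sub_two_mul_sq he h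
    _ = binEntropy e + L * (∫ ω, f ω ∂ν - e) - 2 * ∫ ω, (f ω - e) ^ 2 ∂ν := by
        rw [integral_sub (by fun_prop) (hsq.const_mul 2), integral_add (by fun_prop) (by fun_prop),
          integral_const, integral_const_mul, integral_const_mul, integral_sub hfi (by fun_prop),
          integral_const]
        simp
    _ = binEntropy e - 2 * ∫ ω, (f ω - e) ^ 2 ∂ν := by rw [hmean]; ring

end ProbabilitySpace

section Cube

variable {α : Type*} [MeasurableSpace α] {μ : Measure α}

local notation "μ²" => μ.prod μ
local notation "μ³" => μ.prod (μ.prod μ)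

lemma measurePreserving_rotate [SFinite μ] :
    MeasurePreserving (fun q : α × α × α => (q.2.1, q.2.2, q.1)) μ³ μ³ :=
  (measurePreserving_prodAssoc μ μ μ).comp Measure.measurePreserving_swap

variable [IsProbabilityMeasure μ]

lemma measurePreserving_edge₂₃ :
    MeasurePreserving (fun q : α × α × α => (q.2.1, q.2.2)) μ³ μ² :=
  measurePreserving_snd

lemma measurePreserving_edge₃₁ :
    MeasurePreserving (fun q : α × α × α => (q.2.2, q.1)) μ³ μ² :=
  measurePreserving_edge₂₃.comp measurePreserving_rotate

lemma measurePreserving_edge₁₂ :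
    MeasurePreserving (fun q : α × α × α => (q.1, q.2.1)) μ³ μ² :=
  measurePreserving_edge₃₁.comp measurePreserving_rotate

lemma ae_edges_mem_Icc {W : α × α → ℝ} (hW01 : ∀ᵐ p ∂μ², W p ∈ Icc 0 1) :
    ∀ᵐ q ∂μ³, W (q.1, q.2.1) ∈ Icc 0 1 ∧ W (q.2.1, q.2.2) ∈ Icc 0 1 ∧
      W (q.2.2, q.1) ∈ Icc 0 1 := by
  filter_upwards [measurePreserving_edge₁₂.quasiMeasurePreserving.ae hW01,
    measurePreserving_edge₂₃.quasiMeasurePreserving.ae hW01,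
    measurePreserving_edge₃₁.quasiMeasurePreserving.ae hW01] with q h₁₂ h₂₃ h₃₁
  exact ⟨h₁₂, h₂₃, h₃₁⟩

lemma integrable_triangle {W : α × α → ℝ} (hW : Measurable W)
    (hW01 : ∀ᵐ p ∂μ², W p ∈ Icc 0 1) :
    Integrable (fun q : α × α × α => W (q.1, q.2.1) * W (q.2.1, q.2.2) * W (q.2.2, q.1)) μ³ := by
  refine .of_mem_Icc 0 1 (by fun_prop) ?_
  filter_upwards [ae_edges_mem_Icc hW01] with q ⟨h₁₂, h₂₃, h₃₁⟩
  exact unitInterval.mul_mem (unitInterval.mul_mem h₁₂ h₂₃) h₃₁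

lemma abs_integral_triangle_sub_cube_le {W : α × α → ℝ} {e : ℝ} (hW : Measurable W)
    (hW01 : ∀ᵐ p ∂μ², W p ∈ Icc 0 1) (he : e ∈ Icc 0 1) (hmean : ∫ p, W p ∂μ² = e) :
    |∫ q, W (q.1, q.2.1) * W (q.2.1, q.2.2) * W (q.2.2, q.1) ∂μ³ - e ^ 3|
      ≤ 6 * ∫ p, (W p - e) ^ 2 ∂μ² := by
  set S := ∫ p, (W p - e) ^ 2 ∂μ²
  have hWi : Integrable W μ² := .of_mem_Icc 0 1 hW.aemeasurable hW01
  have hsq : Integrable (fun p => (W p - e) ^ 2) μ² :=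
    .of_mem_Icc 0 1 (by fun_prop) (hW01.mono fun p h => sub_sq_mem_Icc h he)
  have hmean₀ : ∫ p, (W p - e) ∂μ² = 0 := by
    rw [integral_sub hWi (integrable_const e), hmean]; simp
  have edge : ∀ P : α × α × α → α × α, MeasurePreserving P μ³ μ² →
      Integrable (fun q => W (P q) - e) μ³ ∧ ∫ q, (W (P q) - e) ∂μ³ = 0 ∧
      Integrable (fun q => (W (P q) - e) ^ 2) μ³ ∧ ∫ q, (W (P q) - e) ^ 2 ∂μ³ = S := fun P hP =>
    ⟨hP.integrable_comp_of_integrable (hWi.sub (integrable_const e)),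
      (hP.integral_comp_of_aestronglyMeasurable (by fun_prop)).trans hmean₀,
      hP.integrable_comp_of_integrable hsq, hP.integral_comp_of_aestronglyMeasurable hsq.1⟩
  obtain ⟨ia, ma, ia2, sa⟩ := edge _ measurePreserving_edge₁₂
  obtain ⟨ib, mb, ib2, sb⟩ := edge _ measurePreserving_edge₂₃
  obtain ⟨ic, mc, ic2, sc⟩ := edge _ measurePreserving_edge₃₁
  have hT := integrable_triangle hW hW01
  calc |∫ q, W (q.1, q.2.1) * W (q.2.1, q.2.2) * W (q.2.2, q.1) ∂μ³ - e ^ 3|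
      = |∫ q, (W (q.1, q.2.1) * W (q.2.1, q.2.2) * W (q.2.2, q.1) - e ^ 3 - e ^ 2 *
          ((W (q.1, q.2.1) - e) + (W (q.2.1, q.2.2) - e) + (W (q.2.2, q.1) - e))) ∂μ³| := by
        rw [integral_sub (by fun_prop) (by fun_prop), integral_sub hT (by fun_prop),
          integral_const_mul, integral_add (by fun_prop) ic, integral_add ia ib, ma, mb, mc]
        simp
    _ ≤ ∫ q, |W (q.1, q.2.1) * W (q.2.1, q.2.2) * W (q.2.2, q.1) - e ^ 3 - e ^ 2 *
          ((W (q.1, q.2.1) - e) + (W (q.2.1, q.2.2) - e) + (W (q.2.2, q.1) - e))| ∂μ³ :=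
        abs_integral_le_integral_abs
    _ ≤ ∫ q, 2 * ((W (q.1, q.2.1) - e) ^ 2 + (W (q.2.1, q.2.2) - e) ^ 2 + (W (q.2.2, q.1) - e) ^ 2)
          ∂μ³ := by
        refine integral_mono_ae (by fun_prop) (by fun_prop) ?_
        filter_upwards [ae_edges_mem_Icc hW01] with q ⟨_, _, h₃₁⟩
        exact abs_mul_mul_sub_cube_le he h₃₁
    _ = 6 * S := by
        rw [integral_const_mul, integral_add (by fun_prop) ic2, integral_add ia2 ib2, sa, sb, sc]
        ring

end Cube

local notation "μI" => volume.restrict (Icc (0:ℝ) 1)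

instance : IsProbabilityMeasure μI := ⟨by simp⟩

namespace IsGraphon

variable {g : ℝ → ℝ → ℝ}

lemma ae_mem_Icc (hg : IsGraphon g) :
    ∀ᵐ p ∂Measure.prod μI μI, Function.uncurry g p ∈ Icc 0 1 := by
  rw [Measure.prod_restrict]
  filter_upwards [ae_restrict_mem (measurableSet_Icc.prod measurableSet_Icc)] with p hp
  exact hg.2.2 _ hp.1 _ hp.2

lemma edgeDensity_eq (hg : IsGraphon g) :
    edgeDensity g = ∫ p, Function.uncurry g p ∂Measure.prod μI μI :=
  (integral_prod _ (.of_mem_Icc 0 1 hg.1.aemeasurable hg.ae_mem_Icc)).symm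

lemma rateFn_eq (hg : IsGraphon g) :
    rateFn g = -(∫ p, binEntropy (Function.uncurry g p) ∂Measure.prod μI μI) / 2 := by
  simp only [rateFn, I0_eq_neg_binEntropy_div_two]
  rw [← integral_neg, ← integral_div]
  exact (integral_prod _
    ((integrable_binEntropy_comp hg.1.aemeasurable hg.ae_mem_Icc).neg.div_const 2)).symm

lemma triangleDensity_eq (hg : IsGraphon g) :
    triangleDensity g = ∫ q, Function.uncurry g (q.1, q.2.1) * Function.uncurry g (q.2.1, q.2.2) *
      Function.uncurry g (q.2.2, q.1) ∂Measure.prod μI (Measure.prod μI μI) :=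
  (integral_prod_prod (integrable_triangle hg.1 hg.ae_mem_Icc)).symm

end IsGraphon

/-- For every `e ∈ (0,1)` there is `c > 0` such that every graphon `g` with edge
density `e` satisfies `I(g) - I₀(e) ≥ c |t(g) - e³|`. -/
theorem entropy_linear_bound (e : ℝ) (he : e ∈ Ioo (0:ℝ) 1) :
    ∃ c : ℝ, 0 < c ∧ ∀ g : ℝ → ℝ → ℝ, IsGraphon g → edgeDensity g = e →
      rateFn g - I0 e ≥ c * |triangleDensity g - e ^ 3| := by
  refine ⟨1 / 6, by norm_num, fun g hg hedge => ?_⟩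
  rw [hg.edgeDensity_eq] at hedge
  have hentropy := integral_binEntropy_le hg.1.aemeasurable hg.ae_mem_Icc he hedge
  have htriangle :=
    abs_integral_triangle_sub_cube_le hg.1 hg.ae_mem_Icc (Ioo_subset_Icc_self he) hedge
  rw [hg.rateFn_eq, hg.triangleDensity_eq, I0_eq_neg_binEntropy_div_two]
  linarith
end

section
/- Let k : [0,1]² → ℝ be a bounded measurable symmetric function (k(x,y) = k(y,x)). Then equality |∫_{[0,1]³} k(x,y)·k(y,z)·k(z,x) dx dy dz| = (∫_{[0,1]²} k(x,y)² dx dy)^{3/2} holds if and only if the associated integral operator on L²[0,1] has rank at most one, i.e. if and only if there exist c ∈ ℝ and a square-integrable function φ : [0,1] → ℝ such that k(x,y) = c·φ(x)·φ(y) for almost every (x,y). -/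
/-!
Let `k₂(x, z) = ∫ k(x, y) k(y, z) dy` be the kernel of `T_k²`. By symmetry `k₂(x, z)` is the `L²`
inner product of the rows `k(x, ·)` and `k(z, ·)`, so Cauchy–Schwarz gives
`k₂(x, z)² ≤ k₂(x, x) k₂(z, z)` and hence `∫∫ k₂² ≤ (Tr T_k²)²`. Since `Tr T_k³ = ∫∫ k₂ k`,
Cauchy–Schwarz on the product space gives `(Tr T_k³)² ≤ ∫∫ k₂² · Tr T_k² ≤ (Tr T_k²)³`.
Equality forces `k₂(x, z)² = k₂(x, x) k₂(z, z)` almost everywhere, i.e. equality in Cauchy–Schwarz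
for almost all pairs of rows, so `k(x, y) = ψ(x) φ(y)`; symmetry of `k` then gives `ψ = c φ`.
Conversely, for `k = c φ ⊗ φ` both sides equal `|c|³ (∫ φ²)³`.
-/

open MeasureTheory Set

open Function

section CauchySchwarz

variable {α : Type*} [MeasurableSpace α] {μ : Measure α} {f g : α → ℝ}

lemma integral_sub_mul_sq (hf : Integrable (fun a => f a ^ 2) μ)
    (hg : Integrable (fun a => g a ^ 2) μ) (hfg : Integrable (fun a => f a * g a) μ) (t : ℝ) :
    ∫ a, (f a - t * g a) ^ 2 ∂μ =
      (∫ a, g a ^ 2 ∂μ) * (t * t) + (-2 * ∫ a, f a * g a ∂μ) * t + ∫ a, f a ^ 2 ∂μ := by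
  have hexpand : (fun a => (f a - t * g a) ^ 2) =
      fun a => f a ^ 2 - 2 * t * (f a * g a) + t ^ 2 * g a ^ 2 := by
    funext a; ring
  have hfg' : Integrable (fun a => 2 * t * (f a * g a)) μ := hfg.const_mul _
  have hsub : Integrable (fun a => f a ^ 2 - 2 * t * (f a * g a)) μ := hf.sub hfg'
  rw [hexpand, integral_add hsub (hg.const_mul _), integral_sub hf hfg', integral_const_mul,
    integral_const_mul]
  ring

lemma sq_integral_mul_le (hf : Integrable (fun a => f a ^ 2) μ)
    (hg : Integrable (fun a => g a ^ 2) μ) (hfg : Integrable (fun a => f a * g a) μ) :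
    (∫ a, f a * g a ∂μ) ^ 2 ≤ (∫ a, f a ^ 2 ∂μ) * ∫ a, g a ^ 2 ∂μ := by
  have h := discrim_le_zero fun t =>
    (integral_sub_mul_sq hf hg hfg t) ▸ integral_nonneg fun a => sq_nonneg (f a - t * g a)
  rw [discrim] at h
  linarith

lemma ae_eq_mul_of_sq_integral_mul_eq (hf : Integrable (fun a => f a ^ 2) μ)
    (hg : Integrable (fun a => g a ^ 2) μ) (hfg : Integrable (fun a => f a * g a) μ)
    (hg0 : ∫ a, g a ^ 2 ∂μ ≠ 0)
    (heq : (∫ a, f a * g a ∂μ) ^ 2 = (∫ a, f a ^ 2 ∂μ) * ∫ a, g a ^ 2 ∂μ) :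
    ∀ᵐ a ∂μ, f a = (∫ a, f a * g a ∂μ) / (∫ a, g a ^ 2 ∂μ) * g a := by
  set t := (∫ a, f a * g a ∂μ) / ∫ a, g a ^ 2 ∂μ
  have hint : Integrable (fun a => (f a - t * g a) ^ 2) μ :=
    ((hf.sub (hfg.const_mul (2 * t))).add (hg.const_mul (t ^ 2))).congr
      (ae_of_all _ fun a => by simp only [Pi.add_apply, Pi.sub_apply]; ring)
  have hzero : ∫ a, (f a - t * g a) ^ 2 ∂μ = 0 := by
    have hGt : t * ∫ a, g a ^ 2 ∂μ = ∫ a, f a * g a ∂μ := div_mul_cancel₀ _ hg0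
    have hqt : (∫ a, f a * g a ∂μ) * t = ∫ a, f a ^ 2 ∂μ := by
      simp only [t]
      field_simp
      linear_combination heq
    rw [integral_sub_mul_sq hf hg hfg]
    linear_combination t * hGt - hqt
  filter_upwards [(integral_eq_zero_iff_of_nonneg (fun a => sq_nonneg _) hint).mp hzero]
    with a ha
  exact sub_eq_zero.mp (pow_eq_zero_iff two_ne_zero |>.mp ha)

end CauchySchwarz

lemma abs_eq_rpow_three_halves_iff {a s : ℝ} (hs : 0 ≤ s) :
    |a| = s ^ ((3 : ℝ) / 2) ↔ a ^ 2 = s ^ 3 := by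
  rw [← sq_eq_sq₀ (abs_nonneg a) (Real.rpow_nonneg hs _), sq_abs, ← Real.rpow_mul_natCast hs]
  norm_num

lemma integrable_mul_of_abs_le {β : Type*} [MeasurableSpace β] {ν : Measure β}
    [IsFiniteMeasure ν] {f g : β → ℝ} {C D : ℝ} (hf : Measurable f) (hg : Measurable g)
    (hfC : ∀ b, |f b| ≤ C) (hgD : ∀ b, |g b| ≤ D) : Integrable (fun b => f b * g b) ν :=
  .of_bound (hf.mul hg).aestronglyMeasurable (C * D) <| ae_of_all _ fun b => by
    rw [Real.norm_eq_abs, abs_mul]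
    exact mul_le_mul (hfC b) (hgD b) (abs_nonneg _) ((abs_nonneg _).trans (hfC b))

section Kernel

variable {α : Type*} [MeasurableSpace α] {μ : Measure α} {k : α → α → ℝ} {M : ℝ}

noncomputable def kernelSquare (μ : Measure α) (k : α → α → ℝ) (x z : α) : ℝ :=
  ∫ y, k x y * k y z ∂μ

lemma kernelSquare_eq_integral_mul (hsymm : ∀ x y, k x y = k y x) (x z : α) :
    kernelSquare μ k x z = ∫ y, k x y * k z y ∂μ := by
  simp only [kernelSquare, hsymm z]

lemma kernelSquare_comm (hsymm : ∀ x y, k x y = k y x) (x z : α) :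
    kernelSquare μ k x z = kernelSquare μ k z x := by
  simp only [kernelSquare_eq_integral_mul hsymm, mul_comm]

lemma kernelSquare_self (hsymm : ∀ x y, k x y = k y x) (x : α) :
    kernelSquare μ k x x = ∫ y, k x y ^ 2 ∂μ := by
  simp only [kernelSquare_eq_integral_mul hsymm, sq]

lemma measurable_kernelSquare [SFinite μ] (hk : Measurable (uncurry k)) :
    Measurable (uncurry (kernelSquare μ k)) := by
  have h : Measurable fun q : (α × α) × α => k q.1.1 q.2 * k q.2 q.1.2 :=
    (hk.comp (measurable_fst.fst.prodMk measurable_snd)).mul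
      (hk.comp (measurable_snd.prodMk measurable_fst.snd))
  exact h.stronglyMeasurable.integral_prod_right'.measurable

lemma measurable_kernelSquare_self [SFinite μ] (hk : Measurable (uncurry k)) :
    Measurable fun x => kernelSquare μ k x x :=
  (measurable_kernelSquare hk).comp (measurable_id.prodMk measurable_id)

lemma exists_ae_eq_const_mul_mul [SFinite μ] (hsymm : ∀ x y, k x y = k y x) {ψ φ : α → ℝ}
    (hφ : ∃ᵐ y ∂μ, φ y ≠ 0) (h : ∀ᵐ p ∂μ.prod μ, k p.1 p.2 = ψ p.1 * φ p.2) :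
    ∃ c, ∀ᵐ p ∂μ.prod μ, k p.1 p.2 = c * φ p.1 * φ p.2 := by
  have hswap : ∀ᵐ p ∂μ.prod μ, k p.1 p.2 = ψ p.2 * φ p.1 := by
    filter_upwards [Measure.measurePreserving_swap.quasiMeasurePreserving.ae h] with p hp
    rw [hsymm]
    exact hp
  have hcomm : ∀ᵐ x ∂μ, ∀ᵐ y ∂μ, ψ x * φ y = ψ y * φ x :=
    Measure.ae_ae_of_ae_prod <| (h.and hswap).mono fun p hp => hp.1.symm.trans hp.2
  obtain ⟨y₀, hy₀, hψ⟩ := (hφ.and_eventually hcomm).exists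
  refine ⟨ψ y₀ / φ y₀, ?_⟩
  filter_upwards [h, Measure.quasiMeasurePreserving_fst.ae hψ] with p hp hpψ
  rw [hp]
  field_simp
  linear_combination -φ p.2 * hpψ

section RankOne

variable [SFinite μ] {c : ℝ} {φ : α → ℝ}

lemma ae_kernelSquare_eq_of_rank_one (hsymm : ∀ x y, k x y = k y x)
    (h : ∀ᵐ p ∂μ.prod μ, k p.1 p.2 = c * φ p.1 * φ p.2) :
    ∀ᵐ p ∂μ.prod μ, kernelSquare μ k p.1 p.2 = c ^ 2 * (∫ y, φ y ^ 2 ∂μ) * φ p.1 * φ p.2 := by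
  have hrow := Measure.ae_ae_of_ae_prod h
  filter_upwards [Measure.quasiMeasurePreserving_fst.ae hrow,
    Measure.quasiMeasurePreserving_snd.ae hrow] with p hx hz
  rw [kernelSquare_eq_integral_mul hsymm,
    integral_congr_ae (g := fun y => c ^ 2 * φ p.1 * φ p.2 * φ y ^ 2) (by
      filter_upwards [hx, hz] with y hxy hzy
      rw [hxy, hzy]
      ring),
    integral_const_mul]
  ring

lemma integral_sq_kernel_of_rank_one (h : ∀ᵐ p ∂μ.prod μ, k p.1 p.2 = c * φ p.1 * φ p.2) :
    ∫ p, k p.1 p.2 ^ 2 ∂μ.prod μ = c ^ 2 * (∫ y, φ y ^ 2 ∂μ) ^ 2 := by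
  rw [integral_congr_ae (g := fun p => c ^ 2 * φ p.1 ^ 2 * φ p.2 ^ 2) (by
      filter_upwards [h] with p hp
      rw [hp]
      ring),
    integral_prod_mul (fun x => c ^ 2 * φ x ^ 2) (fun y => φ y ^ 2), integral_const_mul]
  ring

lemma integral_kernelSquare_mul_of_rank_one (hsymm : ∀ x y, k x y = k y x)
    (h : ∀ᵐ p ∂μ.prod μ, k p.1 p.2 = c * φ p.1 * φ p.2) :
    ∫ p, kernelSquare μ k p.1 p.2 * k p.1 p.2 ∂μ.prod μ = c ^ 3 * (∫ y, φ y ^ 2 ∂μ) ^ 3 := by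
  rw [integral_congr_ae (g := fun p => c ^ 3 * (∫ y, φ y ^ 2 ∂μ) * φ p.1 ^ 2 * φ p.2 ^ 2) (by
      filter_upwards [h, ae_kernelSquare_eq_of_rank_one hsymm h] with p hp hp₂
      rw [hp, hp₂]
      ring),
    integral_prod_mul (fun x => c ^ 3 * (∫ y, φ y ^ 2 ∂μ) * φ x ^ 2) (fun y => φ y ^ 2),
    integral_const_mul]
  ring

end RankOne

variable [IsFiniteMeasure μ]

lemma abs_kernelSquare_le (hM : ∀ x y, |k x y| ≤ M) (x z : α) :
    |kernelSquare μ k x z| ≤ M * M * μ.real univ :=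
  norm_integral_le_of_norm_le_const (C := M * M) <| ae_of_all _ fun y => by
    rw [Real.norm_eq_abs, abs_mul]
    exact mul_le_mul (hM x y) (hM y z) (abs_nonneg _) ((abs_nonneg _).trans (hM x y))

lemma integrable_mul_row (hk : Measurable (uncurry k)) (hM : ∀ x y, |k x y| ≤ M) (x z : α) :
    Integrable (fun y => k x y * k z y) μ :=
  integrable_mul_of_abs_le (hk.comp measurable_prodMk_left) (hk.comp measurable_prodMk_left)
    (hM x) (hM z)

lemma integrable_sq_row (hk : Measurable (uncurry k)) (hM : ∀ x y, |k x y| ≤ M) (x : α) :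
    Integrable (fun y => k x y ^ 2) μ := by
  simpa only [sq] using integrable_mul_row (μ := μ) hk hM x x

lemma integrable_sq_kernel (hk : Measurable (uncurry k)) (hM : ∀ x y, |k x y| ≤ M) :
    Integrable (fun p : α × α => k p.1 p.2 ^ 2) (μ.prod μ) := by
  simpa only [sq] using integrable_mul_of_abs_le (f := fun p : α × α => k p.1 p.2)
    (g := fun p : α × α => k p.1 p.2) hk hk (fun p => hM p.1 p.2) fun p => hM p.1 p.2

lemma integrable_sq_kernelSquare (hk : Measurable (uncurry k)) (hM : ∀ x y, |k x y| ≤ M) :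
    Integrable (fun p : α × α => kernelSquare μ k p.1 p.2 ^ 2) (μ.prod μ) := by
  simpa only [sq] using integrable_mul_of_abs_le
    (f := fun p : α × α => kernelSquare μ k p.1 p.2)
    (g := fun p : α × α => kernelSquare μ k p.1 p.2)
    (measurable_kernelSquare hk)
    (measurable_kernelSquare hk) (fun p => abs_kernelSquare_le hM p.1 p.2)
    fun p => abs_kernelSquare_le hM p.1 p.2

lemma integrable_kernelSquare_mul (hk : Measurable (uncurry k)) (hM : ∀ x y, |k x y| ≤ M) :
    Integrable (fun p : α × α => kernelSquare μ k p.1 p.2 * k p.1 p.2) (μ.prod μ) :=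
  integrable_mul_of_abs_le (measurable_kernelSquare hk) hk
    (fun p => abs_kernelSquare_le hM p.1 p.2) fun p => hM p.1 p.2

lemma integrable_kernelSquare_self (hk : Measurable (uncurry k)) (hM : ∀ x y, |k x y| ≤ M) :
    Integrable (fun x => kernelSquare μ k x x) μ :=
  .of_bound (measurable_kernelSquare_self hk).aestronglyMeasurable _
    (ae_of_all _ fun x => abs_kernelSquare_le hM x x)

lemma sq_kernelSquare_le (hk : Measurable (uncurry k)) (hM : ∀ x y, |k x y| ≤ M)
    (hsymm : ∀ x y, k x y = k y x) (x z : α) :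
    kernelSquare μ k x z ^ 2 ≤ kernelSquare μ k x x * kernelSquare μ k z z := by
  simpa only [← kernelSquare_self hsymm, ← kernelSquare_eq_integral_mul hsymm] using
    sq_integral_mul_le (integrable_sq_row hk hM x) (integrable_sq_row hk hM z)
      (integrable_mul_row hk hM x z)

lemma integral_kernelSquare_self (hk : Measurable (uncurry k)) (hM : ∀ x y, |k x y| ≤ M)
    (hsymm : ∀ x y, k x y = k y x) :
    ∫ x, kernelSquare μ k x x ∂μ = ∫ p, k p.1 p.2 ^ 2 ∂μ.prod μ := by
  simp only [kernelSquare_self hsymm]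
  exact integral_integral (integrable_sq_kernel hk hM)

lemma integral_sq_kernelSquare_le (hk : Measurable (uncurry k)) (hM : ∀ x y, |k x y| ≤ M)
    (hsymm : ∀ x y, k x y = k y x) :
    ∫ p, kernelSquare μ k p.1 p.2 ^ 2 ∂μ.prod μ ≤ (∫ p, k p.1 p.2 ^ 2 ∂μ.prod μ) ^ 2 := by
  rw [sq (∫ p, _ ∂_), ← integral_kernelSquare_self hk hM hsymm, ← integral_prod_mul]
  exact integral_mono (integrable_sq_kernelSquare hk hM)
    ((integrable_kernelSquare_self hk hM).mul_prod (integrable_kernelSquare_self hk hM))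
    fun p => sq_kernelSquare_le hk hM hsymm p.1 p.2

lemma integral_trace_cube (hk : Measurable (uncurry k)) (hM : ∀ x y, |k x y| ≤ M)
    (hsymm : ∀ x y, k x y = k y x) :
    ∫ x, ∫ y, ∫ z, k x y * k y z * k z x ∂μ ∂μ ∂μ =
      ∫ p, kernelSquare μ k p.1 p.2 * k p.1 p.2 ∂μ.prod μ := by
  have hinner : ∀ x y, ∫ z, k x y * k y z * k z x ∂μ = kernelSquare μ k x y * k x y := by
    intro x y
    rw [kernelSquare_comm hsymm, mul_comm, kernelSquare]
    simp only [mul_assoc, integral_const_mul]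
  simp only [hinner]
  exact integral_integral (integrable_kernelSquare_mul hk hM)

lemma ae_sq_kernelSquare_eq (hk : Measurable (uncurry k)) (hM : ∀ x y, |k x y| ≤ M)
    (hsymm : ∀ x y, k x y = k y x) (hS : ∫ p, k p.1 p.2 ^ 2 ∂μ.prod μ ≠ 0)
    (hA : (∫ p, kernelSquare μ k p.1 p.2 * k p.1 p.2 ∂μ.prod μ) ^ 2 =
      (∫ p, k p.1 p.2 ^ 2 ∂μ.prod μ) ^ 3) :
    ∀ᵐ p ∂μ.prod μ,
      kernelSquare μ k p.1 p.2 ^ 2 = kernelSquare μ k p.1 p.1 * kernelSquare μ k p.2 p.2 := by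
  set S := ∫ p, k p.1 p.2 ^ 2 ∂μ.prod μ
  set K := ∫ p, kernelSquare μ k p.1 p.2 ^ 2 ∂μ.prod μ
  have hSpos : 0 < S := (integral_nonneg fun _ => sq_nonneg _).lt_of_ne' hS
  have hcs : S ^ 3 ≤ K * S := hA ▸ sq_integral_mul_le
    (f := fun p : α × α => kernelSquare μ k p.1 p.2) (g := fun p : α × α => k p.1 p.2)
    (integrable_sq_kernelSquare hk hM) (integrable_sq_kernel hk hM)
    (integrable_kernelSquare_mul hk hM)
  have hK : K = S ^ 2 :=
    le_antisymm (integral_sq_kernelSquare_le hk hM hsymm) (by nlinarith)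
  have hDD : Integrable (fun p : α × α => kernelSquare μ k p.1 p.1 * kernelSquare μ k p.2 p.2)
      (μ.prod μ) :=
    (integrable_kernelSquare_self hk hM).mul_prod (integrable_kernelSquare_self hk hM)
  have hgap : ∫ p, (kernelSquare μ k p.1 p.1 * kernelSquare μ k p.2 p.2 -
      kernelSquare μ k p.1 p.2 ^ 2) ∂μ.prod μ = 0 := by
    rw [integral_sub hDD (integrable_sq_kernelSquare hk hM),
      integral_prod_mul (fun x => kernelSquare μ k x x) (fun x => kernelSquare μ k x x),
      integral_kernelSquare_self hk hM hsymm]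
    change S * S - K = 0
    rw [hK]
    ring
  filter_upwards [(integral_eq_zero_iff_of_nonneg
    (fun p => sub_nonneg.mpr (sq_kernelSquare_le hk hM hsymm p.1 p.2))
    (hDD.sub (integrable_sq_kernelSquare hk hM))).mp hgap] with p hp
  exact (sub_eq_zero.mp hp).symm

/-- `x₀` is a row of nonzero norm at which the Cauchy–Schwarz bound is attained for almost every
`z`; equality in Cauchy–Schwarz then makes almost every row a multiple of the row `k x₀`. -/
lemma exists_ae_eq_mul_row (hk : Measurable (uncurry k)) (hM : ∀ x y, |k x y| ≤ M)
    (hsymm : ∀ x y, k x y = k y x) (hS : ∫ p, k p.1 p.2 ^ 2 ∂μ.prod μ ≠ 0)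
    (h : ∀ᵐ p ∂μ.prod μ,
      kernelSquare μ k p.1 p.2 ^ 2 = kernelSquare μ k p.1 p.1 * kernelSquare μ k p.2 p.2) :
    ∃ x₀, kernelSquare μ k x₀ x₀ ≠ 0 ∧ ∀ᵐ p ∂μ.prod μ,
      k p.1 p.2 = kernelSquare μ k p.1 x₀ / kernelSquare μ k x₀ x₀ * k x₀ p.2 := by
  have hD : ∃ᵐ x ∂μ, kernelSquare μ k x x ≠ 0 :=
    frequently_ae_ne_zero_of_integral_ne_zero
      ((integral_kernelSquare_self (μ := μ) hk hM hsymm).symm ▸ hS)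
  obtain ⟨x₀, hx₀, hslice⟩ := (hD.and_eventually (Measure.ae_ae_of_ae_prod h)).exists
  have hmeas : MeasurableSet {p : α × α |
      k p.1 p.2 = kernelSquare μ k p.1 x₀ / kernelSquare μ k x₀ x₀ * k x₀ p.2} :=
    measurableSet_eq_fun hk
      ((((measurable_kernelSquare hk).comp (measurable_fst.prodMk measurable_const)).div_const
        _).mul ((hk.comp measurable_prodMk_left).comp measurable_snd))
  refine ⟨x₀, hx₀, (Measure.ae_prod_iff_ae_ae hmeas).mpr ?_⟩
  filter_upwards [hslice] with z hz
  have heq : (∫ y, k z y * k x₀ y ∂μ) ^ 2 = (∫ y, k z y ^ 2 ∂μ) * ∫ y, k x₀ y ^ 2 ∂μ := by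
    rw [← kernelSquare_eq_integral_mul hsymm, ← kernelSquare_self hsymm,
      ← kernelSquare_self hsymm, kernelSquare_comm hsymm, hz, mul_comm]
  simpa only [← kernelSquare_eq_integral_mul hsymm, ← kernelSquare_self hsymm] using
    ae_eq_mul_of_sq_integral_mul_eq (integrable_sq_row hk hM z) (integrable_sq_row hk hM x₀)
      (integrable_mul_row hk hM z x₀) (kernelSquare_self hsymm x₀ ▸ hx₀) heq

lemma exists_rank_one_of_sq_trace_cube_eq (hk : Measurable (uncurry k))
    (hM : ∀ x y, |k x y| ≤ M) (hsymm : ∀ x y, k x y = k y x)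
    (hS : ∫ p, k p.1 p.2 ^ 2 ∂μ.prod μ ≠ 0)
    (hA : (∫ p, kernelSquare μ k p.1 p.2 * k p.1 p.2 ∂μ.prod μ) ^ 2 =
      (∫ p, k p.1 p.2 ^ 2 ∂μ.prod μ) ^ 3) :
    ∃ (c : ℝ) (φ : α → ℝ), Measurable φ ∧ Integrable (fun x => φ x ^ 2) μ ∧
      ∀ᵐ p ∂μ.prod μ, k p.1 p.2 = c * φ p.1 * φ p.2 := by
  obtain ⟨x₀, hx₀, hrow⟩ :=
    exists_ae_eq_mul_row hk hM hsymm hS (ae_sq_kernelSquare_eq hk hM hsymm hS hA)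
  have hφ : ∃ᵐ y ∂μ, k x₀ y ≠ 0 :=
    (frequently_ae_ne_zero_of_integral_ne_zero (kernelSquare_self hsymm x₀ ▸ hx₀)).mono
      fun y hy => (pow_ne_zero_iff two_ne_zero).mp hy
  obtain ⟨c, hc⟩ := exists_ae_eq_const_mul_mul
    (ψ := fun x => kernelSquare μ k x x₀ / kernelSquare μ k x₀ x₀) hsymm hφ hrow
  exact ⟨c, k x₀, hk.comp measurable_prodMk_left, integrable_sq_row hk hM x₀, hc⟩

theorem abs_trace_cube_eq_rpow_iff_rank_one (hk : Measurable (uncurry k))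
    (hM : ∀ x y, |k x y| ≤ M) (hsymm : ∀ x y, k x y = k y x) :
    |∫ x, ∫ y, ∫ z, k x y * k y z * k z x ∂μ ∂μ ∂μ| =
        (∫ x, ∫ y, k x y ^ 2 ∂μ ∂μ) ^ ((3 : ℝ) / 2) ↔
      ∃ (c : ℝ) (φ : α → ℝ), Measurable φ ∧ Integrable (fun x => φ x ^ 2) μ ∧
        ∀ᵐ p ∂μ.prod μ, k p.1 p.2 = c * φ p.1 * φ p.2 := by
  rw [integral_trace_cube hk hM hsymm, integral_integral (integrable_sq_kernel hk hM),
    abs_eq_rpow_three_halves_iff (integral_nonneg fun _ => sq_nonneg _)]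
  constructor
  · intro hA
    by_cases hS : ∫ p, k p.1 p.2 ^ 2 ∂μ.prod μ = 0
    · refine ⟨0, 0, measurable_const, by simp, ?_⟩
      filter_upwards [(integral_eq_zero_iff_of_nonneg (fun _ => sq_nonneg _)
        (integrable_sq_kernel hk hM)).mp hS] with p hp
      simpa using hp
    · exact exists_rank_one_of_sq_trace_cube_eq hk hM hsymm hS hA
  · rintro ⟨c, φ, -, -, h⟩
    rw [integral_kernelSquare_mul_of_rank_one hsymm h, integral_sq_kernel_of_rank_one h]
    ring

end Kernel

/-- Equality `|Tr(T_k³)| = (Tr(T_k²))^{3/2}` holds iff the integral operator with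
kernel `k` has rank at most one, i.e. iff `k(x,y) = c φ(x) φ(y)` a.e. on `[0,1]²`
for some `c ∈ ℝ` and square-integrable `φ`. -/
theorem trace_cube_eq_iff_rank_one (k : ℝ → ℝ → ℝ)
    (hmeas : Measurable (Function.uncurry k))
    (hbdd : ∃ M : ℝ, ∀ x y, |k x y| ≤ M)
    (hsymm : ∀ x y, k x y = k y x) :
    |∫ x in Icc (0:ℝ) 1, ∫ y in Icc (0:ℝ) 1, ∫ z in Icc (0:ℝ) 1,
        k x y * k y z * k z x| =
      (∫ x in Icc (0:ℝ) 1, ∫ y in Icc (0:ℝ) 1, (k x y) ^ 2) ^ ((3:ℝ)/2) ↔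
    ∃ (c : ℝ) (φ : ℝ → ℝ), Measurable φ ∧
      IntegrableOn (fun x => (φ x) ^ 2) (Icc (0:ℝ) 1) ∧
      ∀ᵐ p : ℝ × ℝ ∂(volume.restrict (Icc (0:ℝ) 1 ×ˢ Icc (0:ℝ) 1)),
        k p.1 p.2 = c * φ p.1 * φ p.2 := by
  obtain ⟨M, hM⟩ := hbdd
  rw [Measure.volume_eq_prod, ← Measure.prod_restrict]
  exact abs_trace_cube_eq_rpow_iff_rank_one hmeas hM hsymm
end

section
/- Every graphon g satisfies t(g) ≤ e(g)^{3/2}. -/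
/-!
Write `t(g) = ∫∫ g(x,y) g₂(y,x)` with `g₂(y,x) = ∫ g(y,z) g(z,x) dz` the operator square of `g`.
Cauchy–Schwarz on the square gives `t ≤ ‖g‖₂ ‖g₂‖₂`, and Cauchy–Schwarz in `z` gives
`‖g₂‖₂ ≤ ‖g‖₂²`, so `t ≤ ‖g‖₂³`. Since `0 ≤ g ≤ 1`, `‖g‖₂² = ∫∫ g² ≤ ∫∫ g = e(g)`.
The inequality is proved for `ℝ≥0∞`-valued kernels, where Tonelli needs no integrability.
-/

open MeasureTheory Set

open Function
open scoped ENNReal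

section Kernel

variable {α β γ : Type*} [MeasurableSpace α] [MeasurableSpace β] [MeasurableSpace γ]
  {μ : Measure α} {ν : Measure β} {ρ : Measure γ}

theorem lintegral_mul_sq_le {f h : α → ℝ≥0∞} (hf : AEMeasurable f μ) (hh : AEMeasurable h μ) :
    (∫⁻ a, f a * h a ∂μ) ^ 2 ≤ (∫⁻ a, f a ^ 2 ∂μ) * ∫⁻ a, h a ^ 2 ∂μ := by
  have holder := ENNReal.lintegral_mul_le_Lp_mul_Lq μ Real.HolderConjugate.two_two hf hh
  simp only [Pi.mul_apply, ENNReal.rpow_two] at holder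
  calc (∫⁻ a, f a * h a ∂μ) ^ 2
      ≤ ((∫⁻ a, f a ^ 2 ∂μ) ^ (1 / 2 : ℝ) * (∫⁻ a, h a ^ 2 ∂μ) ^ (1 / 2 : ℝ)) ^ 2 := by
        gcongr
    _ = (∫⁻ a, f a ^ 2 ∂μ) * ∫⁻ a, h a ^ 2 ∂μ := by
        rw [mul_pow, ← ENNReal.rpow_two, ← ENNReal.rpow_two, ← ENNReal.rpow_mul,
          ← ENNReal.rpow_mul]
        norm_num

theorem lintegral_lintegral_mul_sq_le [SFinite ν] {f h : α → β → ℝ≥0∞}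
    (hf : AEMeasurable (uncurry f) (μ.prod ν)) (hh : AEMeasurable (uncurry h) (μ.prod ν)) :
    (∫⁻ x, ∫⁻ y, f x y * h x y ∂ν ∂μ) ^ 2
      ≤ (∫⁻ x, ∫⁻ y, f x y ^ 2 ∂ν ∂μ) * ∫⁻ x, ∫⁻ y, h x y ^ 2 ∂ν ∂μ := by
  rw [lintegral_lintegral (hf.mul hh), lintegral_lintegral (hf.pow_const 2),
    lintegral_lintegral (hh.pow_const 2)]
  exact lintegral_mul_sq_le hf hh

theorem lintegral_lintegral_sq_lintegral_mul_le [SFinite ν] [SFinite ρ] {K : α → β → ℝ≥0∞}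
    {L : β → γ → ℝ≥0∞} (hK : Measurable (uncurry K)) (hL : Measurable (uncurry L)) :
    ∫⁻ x, ∫⁻ z, (∫⁻ y, K x y * L y z ∂ν) ^ 2 ∂ρ ∂μ
      ≤ (∫⁻ x, ∫⁻ y, K x y ^ 2 ∂ν ∂μ) * ∫⁻ y, ∫⁻ z, L y z ^ 2 ∂ρ ∂ν := by
  calc ∫⁻ x, ∫⁻ z, (∫⁻ y, K x y * L y z ∂ν) ^ 2 ∂ρ ∂μ
      ≤ ∫⁻ x, ∫⁻ z, (∫⁻ y, K x y ^ 2 ∂ν) * ∫⁻ y, L y z ^ 2 ∂ν ∂ρ ∂μ := by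
        gcongr with x z
        exact lintegral_mul_sq_le (hK.comp measurable_prodMk_left).aemeasurable
          (hL.comp measurable_prodMk_right).aemeasurable
    _ = (∫⁻ x, ∫⁻ y, K x y ^ 2 ∂ν ∂μ) * ∫⁻ z, ∫⁻ y, L y z ^ 2 ∂ν ∂ρ :=
        lintegral_lintegral_mul (hK.pow_const 2).lintegral_prod_right'.aemeasurable
          (hL.pow_const 2).lintegral_prod_left'.aemeasurable
    _ = (∫⁻ x, ∫⁻ y, K x y ^ 2 ∂ν ∂μ) * ∫⁻ y, ∫⁻ z, L y z ^ 2 ∂ρ ∂ν := by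
        rw [lintegral_lintegral_swap (f := fun z y => L y z ^ 2)
          ((hL.comp measurable_swap).pow_const 2).aemeasurable]

theorem lintegral_triangle_le [SFinite μ] {G : α → α → ℝ≥0∞} (hG : Measurable (uncurry G)) :
    ∫⁻ x, ∫⁻ y, ∫⁻ z, G x y * G y z * G z x ∂μ ∂μ ∂μ
      ≤ (∫⁻ x, ∫⁻ y, G x y ^ 2 ∂μ ∂μ) ^ (3 / 2 : ℝ) := by
  set Q := ∫⁻ x, ∫⁻ y, G x y ^ 2 ∂μ ∂μ
  set G₂ : α → α → ℝ≥0∞ := fun y x => ∫⁻ z, G y z * G z x ∂μ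
  have hG₂ : Measurable (uncurry G₂) :=
    ((hG.comp (measurable_fst.fst.prodMk measurable_snd)).mul
      (hG.comp (measurable_snd.prodMk measurable_fst.snd))).lintegral_prod_right'
  have htriangle : ∫⁻ x, ∫⁻ y, ∫⁻ z, G x y * G y z * G z x ∂μ ∂μ ∂μ
      = ∫⁻ x, ∫⁻ y, G x y * G₂ y x ∂μ ∂μ := by
    refine lintegral_congr fun x => lintegral_congr fun y => ?_
    simp_rw [G₂, mul_assoc]
    exact lintegral_const_mul _ ((hG.comp measurable_prodMk_left).mul
      (hG.comp measurable_prodMk_right))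
  have hsq : (∫⁻ x, ∫⁻ y, G x y * G₂ y x ∂μ ∂μ) ^ 2 ≤ Q ^ 3 :=
    calc (∫⁻ x, ∫⁻ y, G x y * G₂ y x ∂μ ∂μ) ^ 2
        ≤ Q * ∫⁻ x, ∫⁻ y, G₂ y x ^ 2 ∂μ ∂μ :=
          lintegral_lintegral_mul_sq_le hG.aemeasurable (hG₂.comp measurable_swap).aemeasurable
      _ = Q * ∫⁻ y, ∫⁻ x, G₂ y x ^ 2 ∂μ ∂μ := by
          rw [lintegral_lintegral_swap (f := fun x y => G₂ y x ^ 2)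
            ((hG₂.comp measurable_swap).pow_const 2).aemeasurable]
      _ ≤ Q * (Q * Q) := by
          gcongr
          exact lintegral_lintegral_sq_lintegral_mul_le hG hG
      _ = Q ^ 3 := by ring
  have hpow : (Q ^ (3 / 2 : ℝ)) ^ 2 = Q ^ 3 := by
    rw [← ENNReal.rpow_natCast, ← ENNReal.rpow_mul]
    norm_num
  rwa [htriangle, ← ENNReal.pow_le_pow_left_iff two_ne_zero, hpow]

theorem integral_integral_eq_toReal_lintegral [SFinite ν] {f : α → β → ℝ}
    (hf : Measurable (uncurry f)) (hf₀ : ∀ x y, 0 ≤ f x y)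
    (hfin : ∫⁻ x, ∫⁻ y, ENNReal.ofReal (f x y) ∂ν ∂μ ≠ ∞) :
    ∫ x, ∫ y, f x y ∂ν ∂μ = (∫⁻ x, ∫⁻ y, ENNReal.ofReal (f x y) ∂ν ∂μ).toReal := by
  have hL : Measurable fun x => ∫⁻ y, ENNReal.ofReal (f x y) ∂ν :=
    (ENNReal.measurable_ofReal.comp hf).lintegral_prod_right'
  rw [← integral_toReal hL.aemeasurable (ae_lt_top' hL.aemeasurable hfin)]
  refine integral_congr_ae (ae_of_all _ fun x => ?_)
  exact integral_eq_lintegral_of_nonneg_ae (ae_of_all _ (hf₀ x))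
    (hf.comp measurable_prodMk_left).aestronglyMeasurable

theorem integral_integral_integral_eq_toReal_lintegral [SFinite ν] [SFinite ρ]
    {f : α → β → γ → ℝ} (hf : Measurable (uncurry (uncurry f))) (hf₀ : ∀ x y z, 0 ≤ f x y z)
    (hfin : ∫⁻ x, ∫⁻ y, ∫⁻ z, ENNReal.ofReal (f x y z) ∂ρ ∂ν ∂μ ≠ ∞) :
    ∫ x, ∫ y, ∫ z, f x y z ∂ρ ∂ν ∂μ
      = (∫⁻ x, ∫⁻ y, ∫⁻ z, ENNReal.ofReal (f x y z) ∂ρ ∂ν ∂μ).toReal := by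
  have hL : Measurable fun x => ∫⁻ y, ∫⁻ z, ENNReal.ofReal (f x y z) ∂ρ ∂ν :=
    (ENNReal.measurable_ofReal.comp hf).lintegral_prod_right'.lintegral_prod_right'
  have hL_lt_top := ae_lt_top' hL.aemeasurable hfin
  rw [← integral_toReal hL.aemeasurable hL_lt_top]
  refine integral_congr_ae (hL_lt_top.mono fun x hx => ?_)
  exact integral_integral_eq_toReal_lintegral
    (hf.comp ((measurable_const.prodMk measurable_fst).prodMk measurable_snd)) (hf₀ x) hx.ne

theorem integral_triangle_le_integral_pow [IsFiniteMeasure μ] {f : α → α → ℝ}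
    (hf : Measurable (uncurry f)) (hf₀ : ∀ x y, 0 ≤ f x y) (hf₁ : ∀ x y, f x y ≤ 1) :
    ∫ x, ∫ y, ∫ z, f x y * f y z * f z x ∂μ ∂μ ∂μ ≤ (∫ x, ∫ y, f x y ∂μ ∂μ) ^ (3 / 2 : ℝ) := by
  set G : α → α → ℝ≥0∞ := fun x y => ENNReal.ofReal (f x y)
  set E := ∫⁻ x, ∫⁻ y, G x y ∂μ ∂μ
  have hG_le_one (x y : α) : G x y ≤ 1 := ENNReal.ofReal_le_one.2 (hf₁ x y)
  have hE : E ≠ ∞ := by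
    refine ne_top_of_le_ne_top (b := ∫⁻ _, ∫⁻ _, 1 ∂μ ∂μ) ?_
      (lintegral_mono fun x => lintegral_mono fun y => hG_le_one x y)
    simpa using ENNReal.mul_ne_top (measure_ne_top μ univ) (measure_ne_top μ univ)
  have htriangle : ∫⁻ x, ∫⁻ y, ∫⁻ z, ENNReal.ofReal (f x y * f y z * f z x) ∂μ ∂μ ∂μ
      ≤ E ^ (3 / 2 : ℝ) := by
    simp_rw [ENNReal.ofReal_mul (mul_nonneg (hf₀ _ _) (hf₀ _ _)), ENNReal.ofReal_mul (hf₀ _ _)]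
    refine (lintegral_triangle_le (G := G) (ENNReal.measurable_ofReal.comp hf)).trans ?_
    refine ENNReal.rpow_le_rpow (lintegral_mono fun x => lintegral_mono fun y => ?_) (by norm_num)
    exact pow_le_of_le_one zero_le (hG_le_one x y) two_ne_zero
  have hE_rpow : E ^ (3 / 2 : ℝ) ≠ ∞ := ENNReal.rpow_ne_top_of_nonneg (by norm_num) hE
  rw [integral_integral_integral_eq_toReal_lintegral (by fun_prop)
      (fun x y z => mul_nonneg (mul_nonneg (hf₀ x y) (hf₀ y z)) (hf₀ z x))
      (ne_top_of_le_ne_top hE_rpow htriangle),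
    integral_integral_eq_toReal_lintegral hf hf₀ hE, ENNReal.toReal_rpow]
  exact ENNReal.toReal_mono hE_rpow htriangle

end Kernel

/-- Every graphon satisfies `t(g) ≤ e(g)^{3/2}`. -/
theorem triangle_le_edge_pow (g : ℝ → ℝ → ℝ) (hg : IsGraphon g) :
    triangleDensity g ≤ (edgeDensity g) ^ ((3:ℝ)/2) := by
  obtain ⟨hg_meas, -, hg_mem⟩ := hg
  -- `g` is bounded only on the unit square; clamping it into `[0,1]` leaves both densities unchanged.
  set f : ℝ → ℝ → ℝ := fun x y => max 0 (min (g x y) 1)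
  have hf_eq : ∀ x ∈ Icc (0:ℝ) 1, ∀ y ∈ Icc (0:ℝ) 1, f x y = g x y := fun x hx y hy => by
    simp only [f, min_eq_left (hg_mem x hx y hy).2, max_eq_right (hg_mem x hx y hy).1]
  have htriangle : triangleDensity g
      = ∫ x in Icc (0:ℝ) 1, ∫ y in Icc (0:ℝ) 1, ∫ z in Icc (0:ℝ) 1, f x y * f y z * f z x := by
    refine setIntegral_congr_fun measurableSet_Icc fun x hx => ?_
    refine setIntegral_congr_fun measurableSet_Icc fun y hy => ?_
    refine setIntegral_congr_fun measurableSet_Icc fun z hz => ?_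
    rw [hf_eq x hx y hy, hf_eq y hy z hz, hf_eq z hz x hx]
  have hedge : edgeDensity g = ∫ x in Icc (0:ℝ) 1, ∫ y in Icc (0:ℝ) 1, f x y := by
    refine setIntegral_congr_fun measurableSet_Icc fun x hx => ?_
    exact setIntegral_congr_fun measurableSet_Icc fun y hy => (hf_eq x hx y hy).symm
  rw [htriangle, hedge]
  exact integral_triangle_le_integral_pow (by fun_prop) (fun _ _ => le_max_left _ _)
    (fun _ _ => max_le zero_le_one (min_le_right _ _))
end

section
/- Let g be a graphon with t(g) = e(g)^{3/2}. Then there exists a measurable set A ⊆ [0,1] with Lebesgue measure λ(A) = √(e(g)) such that g(x,y) = 1_A(x)·1_A(y) for almost every (x,y) ∈ [0,1]². (Equivalently, up to a measure-preserving transformation of [0,1], g is the indicator of the square [0,√(e(g))]², so each point on the upper boundary t = e^{3/2} of the achievable region is realized by a unique reduced graphon.) -/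
/-!
Write `d(x) = ∫ g(x,y) dy` for the degree and `W(x,y) = ∫ g(x,z) g(y,z) dz` for the codegree, so
that `t(g) = ∫∫ g W` by symmetry. Since `0 ≤ g ≤ 1` we have `∫∫ g² ≤ e`, and Cauchy–Schwarz gives
`W(x,y)² ≤ d(x) d(y)`, hence `∫∫ W² ≤ e²`. Expanding
`0 ≤ ∫∫ (√e g - W)² = e ∫∫ g² - 2 √e t + ∫∫ W² ≤ 2 e² - 2 √e t`
shows `t ≤ e^{3/2}`, and equality forces `√e g = W` and `W² = d ⊗ d` almost everywhere.
So `g = u ⊗ u` with `u = √(d / √e)`. Integrating out one variable gives `d = (∫ u) u = √e u`,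
while `d = √e u²` by construction: `u² = u`, and `u` is the indicator of a set of measure `√e`.
-/

open MeasureTheory Set

open Function

section

variable {β : Type*} [MeasurableSpace β] {ν : Measure β}

lemma memLp_of_ae_mem_Icc [IsFiniteMeasure ν] {f : β → ℝ} (p : ENNReal)
    (hf : AEStronglyMeasurable f ν) (h01 : ∀ᵐ x ∂ν, f x ∈ Icc 0 1) : MemLp f p ν :=
  .of_bound hf 1 <| h01.mono fun _ hx => by rw [Real.norm_of_nonneg hx.1]; exact hx.2

lemma integrable_of_ae_mem_Icc [IsFiniteMeasure ν] {f : β → ℝ}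
    (hf : AEStronglyMeasurable f ν) (h01 : ∀ᵐ x ∂ν, f x ∈ Icc 0 1) : Integrable f ν :=
  memLp_one_iff_integrable.1 (memLp_of_ae_mem_Icc 1 hf h01)

lemma integral_mem_Icc_of_ae_mem_Icc [IsProbabilityMeasure ν] {f : β → ℝ}
    (h01 : ∀ᵐ x ∂ν, f x ∈ Icc 0 1) : ∫ x, f x ∂ν ∈ Icc 0 1 := by
  refine ⟨integral_nonneg_of_ae (h01.mono fun _ hx => hx.1), ?_⟩
  simpa using integral_mono_of_nonneg (h01.mono fun _ hx => hx.1) (integrable_const 1)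
    (h01.mono fun _ hx => hx.2)

lemma sq_integral_mul_le_of_nonneg {f w : β → ℝ} (hf0 : 0 ≤ᵐ[ν] f) (hw0 : 0 ≤ᵐ[ν] w)
    (hf : MemLp f 2 ν) (hw : MemLp w 2 ν) :
    (∫ x, f x * w x ∂ν) ^ 2 ≤ (∫ x, f x ^ 2 ∂ν) * ∫ x, w x ^ 2 ∂ν := by
  have holder := integral_mul_le_Lp_mul_Lq_of_nonneg Real.HolderConjugate.two_two hf0 hw0
    (by simpa using hf) (by simpa using hw)
  simp only [Real.rpow_two, ← Real.sqrt_eq_rpow] at holder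
  have hfw0 : 0 ≤ ∫ x, f x * w x ∂ν :=
    integral_nonneg_of_ae ((hf0.and hw0).mono fun _ h => mul_nonneg h.1 h.2)
  calc (∫ x, f x * w x ∂ν) ^ 2
      ≤ (√(∫ x, f x ^ 2 ∂ν) * √(∫ x, w x ^ 2 ∂ν)) ^ 2 := pow_le_pow_left₀ hfw0 holder 2
    _ = (∫ x, f x ^ 2 ∂ν) * ∫ x, w x ^ 2 ∂ν := by
      rw [mul_pow, Real.sq_sqrt (integral_nonneg fun _ => sq_nonneg _),
        Real.sq_sqrt (integral_nonneg fun _ => sq_nonneg _)]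

lemma integral_mul_sub_sq {f w : β → ℝ} (hf : MemLp f 2 ν) (hw : MemLp w 2 ν) (c : ℝ) :
    ∫ x, (c * f x - w x) ^ 2 ∂ν =
      c ^ 2 * ∫ x, f x ^ 2 ∂ν - 2 * c * ∫ x, f x * w x ∂ν + ∫ x, w x ^ 2 ∂ν := by
  have hexp : (fun x => (c * f x - w x) ^ 2) =
      fun x => c ^ 2 * f x ^ 2 - 2 * c * (f x * w x) + w x ^ 2 := by
    ext x; ring
  have hfw : Integrable (fun x => f x * w x) ν := hf.integrable_mul hw
  have hlin : Integrable (fun x => c ^ 2 * f x ^ 2 - 2 * c * (f x * w x)) ν :=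
    (hf.integrable_sq.const_mul _).sub (hfw.const_mul _)
  rw [hexp, integral_add hlin hw.integrable_sq,
    integral_sub (hf.integrable_sq.const_mul _) (hfw.const_mul _),
    integral_const_mul, integral_const_mul]

lemma ae_eq_indicator_of_sq_eq {u : β → ℝ} (h : ∀ᵐ x ∂ν, u x ^ 2 = u x) :
    u =ᵐ[ν] {x | u x = 1}.indicator fun _ => 1 := by
  filter_upwards [h] with x hx
  rcases (mul_eq_zero.mp (by linear_combination hx : u x * (u x - 1) = 0)) with h0 | h1
  · simp [h0]
  · simp [sub_eq_zero.mp h1]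

end

namespace Graphon

noncomputable def degree {α : Type*} [MeasurableSpace α] (μ : Measure α) (g : α → α → ℝ)
    (x : α) : ℝ :=
  ∫ y, g x y ∂μ

noncomputable def codegree {α : Type*} [MeasurableSpace α] (μ : Measure α) (g : α → α → ℝ)
    (x y : α) : ℝ :=
  ∫ z, g x z * g y z ∂μ

variable {α : Type*} [MeasurableSpace α] {μ : Measure α} {g : α → α → ℝ}

section SFinite

variable [SFinite μ]

lemma measurable_degree (hg : Measurable (uncurry g)) : Measurable (degree μ g) :=
  hg.stronglyMeasurable.integral_prod_right'.measurable

lemma measurable_codegree (hg : Measurable (uncurry g)) :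
    Measurable (uncurry (codegree μ g)) := by
  have hprod : Measurable fun q : (α × α) × α => g q.1.1 q.2 * g q.1.2 q.2 :=
    (hg.comp (measurable_fst.fst.prodMk measurable_snd)).mul
      (hg.comp (measurable_fst.snd.prodMk measurable_snd))
  exact hprod.stronglyMeasurable.integral_prod_right'.measurable

lemma ae_prod_sections_mem_Icc (h01 : ∀ᵐ p ∂μ.prod μ, g p.1 p.2 ∈ Icc 0 1) :
    ∀ᵐ p ∂μ.prod μ, (∀ᵐ z ∂μ, g p.1 z ∈ Icc 0 1) ∧ ∀ᵐ z ∂μ, g p.2 z ∈ Icc 0 1 :=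
  (Measure.quasiMeasurePreserving_fst.ae (Measure.ae_ae_of_ae_prod h01)).and
    (Measure.quasiMeasurePreserving_snd.ae (Measure.ae_ae_of_ae_prod h01))

lemma degree_eq_of_ae_eq_mul {u : α → ℝ}
    (hgu : ∀ᵐ p ∂μ.prod μ, g p.1 p.2 = u p.1 * u p.2) :
    ∀ᵐ x ∂μ, degree μ g x = u x * ∫ y, u y ∂μ := by
  filter_upwards [Measure.ae_ae_of_ae_prod hgu] with x hx
  rw [degree, integral_congr_ae hx, integral_const_mul]

end SFinite

section IsFiniteMeasure

variable [IsFiniteMeasure μ]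

lemma integral_sq_le_degree (hg : Measurable (uncurry g)) {x : α}
    (hx : ∀ᵐ y ∂μ, g x y ∈ Icc 0 1) : ∫ y, g x y ^ 2 ∂μ ≤ degree μ g x :=
  integral_mono_of_nonneg (.of_forall fun _ => sq_nonneg _)
    (integrable_of_ae_mem_Icc hg.of_uncurry_left.aestronglyMeasurable hx)
    (hx.mono fun _ h => pow_le_of_le_one h.1 h.2 two_ne_zero)

lemma integral_degree (hg : Measurable (uncurry g))
    (h01 : ∀ᵐ p ∂μ.prod μ, g p.1 p.2 ∈ Icc 0 1) :
    ∫ x, degree μ g x ∂μ = ∫ p, g p.1 p.2 ∂μ.prod μ :=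
  integral_integral (integrable_of_ae_mem_Icc hg.aestronglyMeasurable h01)

end IsFiniteMeasure

variable [IsProbabilityMeasure μ]

lemma degree_mem_Icc {x : α} (hx : ∀ᵐ y ∂μ, g x y ∈ Icc 0 1) : degree μ g x ∈ Icc 0 1 :=
  integral_mem_Icc_of_ae_mem_Icc hx

lemma codegree_mem_Icc {x y : α} (hx : ∀ᵐ z ∂μ, g x z ∈ Icc 0 1)
    (hy : ∀ᵐ z ∂μ, g y z ∈ Icc 0 1) : codegree μ g x y ∈ Icc 0 1 :=
  integral_mem_Icc_of_ae_mem_Icc ((hx.and hy).mono fun _ h => unitInterval.mul_mem h.1 h.2)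

lemma codegree_sq_le (hg : Measurable (uncurry g)) {x y : α}
    (hx : ∀ᵐ z ∂μ, g x z ∈ Icc 0 1) (hy : ∀ᵐ z ∂μ, g y z ∈ Icc 0 1) :
    codegree μ g x y ^ 2 ≤ degree μ g x * degree μ g y := by
  have memLp {x : α} (hx : ∀ᵐ z ∂μ, g x z ∈ Icc 0 1) : MemLp (g x) 2 μ :=
    memLp_of_ae_mem_Icc 2 hg.of_uncurry_left.aestronglyMeasurable hx
  calc codegree μ g x y ^ 2 ≤ (∫ z, g x z ^ 2 ∂μ) * ∫ z, g y z ^ 2 ∂μ :=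
        sq_integral_mul_le_of_nonneg (hx.mono fun _ h => h.1) (hy.mono fun _ h => h.1)
          (memLp hx) (memLp hy)
    _ ≤ degree μ g x * degree μ g y :=
        mul_le_mul (integral_sq_le_degree hg hx) (integral_sq_le_degree hg hy)
          (integral_nonneg fun _ => sq_nonneg _) (degree_mem_Icc hx).1

lemma integral_triangle_eq (hg : Measurable (uncurry g))
    (hsymm : ∀ᵐ p ∂μ.prod μ, g p.2 p.1 = g p.1 p.2)
    (h01 : ∀ᵐ p ∂μ.prod μ, g p.1 p.2 ∈ Icc 0 1) :
    ∫ x, ∫ y, ∫ z, g x y * g y z * g z x ∂μ ∂μ ∂μ =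
      ∫ p, g p.1 p.2 * codegree μ g p.1 p.2 ∂μ.prod μ := by
  have hint : Integrable (uncurry fun x y => g x y * codegree μ g x y) (μ.prod μ) :=
    integrable_of_ae_mem_Icc (hg.mul (measurable_codegree hg)).aestronglyMeasurable <|
      (h01.and (ae_prod_sections_mem_Icc h01)).mono fun _ h =>
        unitInterval.mul_mem h.1 (codegree_mem_Icc h.2.1 h.2.2)
  refine (integral_congr_ae ?_).trans (integral_integral hint)
  filter_upwards [Measure.ae_ae_of_ae_prod hsymm] with x hx
  refine integral_congr_ae (.of_forall fun y => ?_)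
  simp only [codegree, ← integral_const_mul]
  refine integral_congr_ae ?_
  filter_upwards [hx] with z hz
  rw [hz]; ring

lemma ae_codegree_eq_of_integral_mul_codegree_eq (hg : Measurable (uncurry g))
    (h01 : ∀ᵐ p ∂μ.prod μ, g p.1 p.2 ∈ Icc 0 1) {E : ℝ} (hE : ∫ p, g p.1 p.2 ∂μ.prod μ = E)
    (hE0 : 0 < E) (ht : ∫ p, g p.1 p.2 * codegree μ g p.1 p.2 ∂μ.prod μ = E * √E) :
    (∀ᵐ p ∂μ.prod μ, √E * g p.1 p.2 = codegree μ g p.1 p.2) ∧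
      ∀ᵐ p ∂μ.prod μ, codegree μ g p.1 p.2 ^ 2 = degree μ g p.1 * degree μ g p.2 := by
  have hsec := ae_prod_sections_mem_Icc h01
  have hgL : MemLp (fun p : α × α => g p.1 p.2) 2 (μ.prod μ) :=
    memLp_of_ae_mem_Icc 2 hg.aestronglyMeasurable h01
  have hWL : MemLp (fun p : α × α => codegree μ g p.1 p.2) 2 (μ.prod μ) :=
    memLp_of_ae_mem_Icc 2 (measurable_codegree hg).aestronglyMeasurable <|
      hsec.mono fun _ h => codegree_mem_Icc h.1 h.2
  have hdd : Integrable (fun p : α × α => degree μ g p.1 * degree μ g p.2) (μ.prod μ) :=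
    integrable_of_ae_mem_Icc
      ((measurable_degree hg).comp measurable_fst |>.mul
        ((measurable_degree hg).comp measurable_snd)).aestronglyMeasurable <|
      hsec.mono fun _ h => unitInterval.mul_mem (degree_mem_Icc h.1) (degree_mem_Icc h.2)
  have hWd : ∀ᵐ p ∂μ.prod μ, codegree μ g p.1 p.2 ^ 2 ≤ degree μ g p.1 * degree μ g p.2 :=
    hsec.mono fun _ h => codegree_sq_le hg h.1 h.2
  have hg2_le : ∫ p, g p.1 p.2 ^ 2 ∂μ.prod μ ≤ E :=
    hE ▸ integral_mono_of_nonneg (.of_forall fun _ => sq_nonneg _) (hgL.integrable one_le_two)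
      (h01.mono fun _ h => pow_le_of_le_one h.1 h.2 two_ne_zero)
  have hdd_eq : ∫ p, degree μ g p.1 * degree μ g p.2 ∂μ.prod μ = E * E := by
    rw [integral_prod_mul, integral_degree hg h01, hE]
  have hW2_le : ∫ p, codegree μ g p.1 p.2 ^ 2 ∂μ.prod μ ≤ E * E :=
    hdd_eq ▸ integral_mono_ae hWL.integrable_sq hdd hWd
  -- expanding `∫ (√E g - W)² ≥ 0` with the three bounds above forces equality everywhere
  have hexp := integral_mul_sub_sq hgL hWL √E
  have hnn : 0 ≤ ∫ p, (√E * g p.1 p.2 - codegree μ g p.1 p.2) ^ 2 ∂μ.prod μ :=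
    integral_nonneg fun _ => sq_nonneg _
  rw [ht, Real.sq_sqrt hE0.le] at hexp
  have hsqrt : √E * √E = E := Real.mul_self_sqrt hE0.le
  have hzero : ∫ p, (√E * g p.1 p.2 - codegree μ g p.1 p.2) ^ 2 ∂μ.prod μ = 0 := by
    nlinarith
  refine ⟨?_, (integral_eq_iff_of_ae_le hWL.integrable_sq hdd hWd).1 (by nlinarith)⟩
  filter_upwards [(integral_eq_zero_iff_of_nonneg (fun _ => sq_nonneg _)
    ((hgL.const_mul √E).sub hWL).integrable_sq).1 hzero] with p hp
  exact sub_eq_zero.mp (pow_eq_zero_iff two_ne_zero |>.mp hp)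

lemma exists_indicator_of_ae_eq_mul {u : α → ℝ} (hu : Measurable u)
    (hgu : ∀ᵐ p ∂μ.prod μ, g p.1 p.2 = u p.1 * u p.2)
    {c : ℝ} (hc : ∫ x, u x ∂μ = c) (hc0 : c ≠ 0)
    (hdeg : ∀ᵐ x ∂μ, degree μ g x = c * u x ^ 2) :
    ∃ A : Set α, MeasurableSet A ∧ μ A = ENNReal.ofReal c ∧
      ∀ᵐ p ∂μ.prod μ, g p.1 p.2 = A.indicator (fun _ => 1) p.1 * A.indicator (fun _ => 1) p.2 := by
  have hsq : ∀ᵐ x ∂μ, u x ^ 2 = u x := by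
    filter_upwards [hdeg, degree_eq_of_ae_eq_mul hgu] with x h1 h2
    exact mul_left_cancel₀ hc0 (by rw [← h1, h2, hc, mul_comm])
  have hA : MeasurableSet {x | u x = 1} := measurableSet_eq_fun hu measurable_const
  have hind := ae_eq_indicator_of_sq_eq hsq
  refine ⟨{x | u x = 1}, hA, ?_, ?_⟩
  · rw [← hc, integral_congr_ae hind, integral_indicator_const _ hA, smul_eq_mul, mul_one,
      ofReal_measureReal]
  · filter_upwards [hgu, Measure.quasiMeasurePreserving_fst.ae hind,
      Measure.quasiMeasurePreserving_snd.ae hind] with p hp h1 h2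
    rw [hp, h1, h2]

theorem exists_indicator_of_integral_mul_codegree_eq (hg : Measurable (uncurry g))
    (h01 : ∀ᵐ p ∂μ.prod μ, g p.1 p.2 ∈ Icc 0 1) {E : ℝ} (hE : ∫ p, g p.1 p.2 ∂μ.prod μ = E)
    (ht : ∫ p, g p.1 p.2 * codegree μ g p.1 p.2 ∂μ.prod μ = E ^ (3 / 2 : ℝ)) :
    ∃ A : Set α, MeasurableSet A ∧ μ A = ENNReal.ofReal √E ∧
      ∀ᵐ p ∂μ.prod μ, g p.1 p.2 = A.indicator (fun _ => 1) p.1 * A.indicator (fun _ => 1) p.2 := by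
  have hg0 : 0 ≤ᵐ[μ.prod μ] fun p => g p.1 p.2 := h01.mono fun _ h => h.1
  rcases (hE ▸ integral_nonneg_of_ae hg0 : 0 ≤ E).eq_or_lt with rfl | hE0
  · refine ⟨∅, .empty, by simp, ?_⟩
    filter_upwards [(integral_eq_zero_iff_of_nonneg_ae hg0
      (integrable_of_ae_mem_Icc hg.aestronglyMeasurable h01)).1 hE] with p hp
    simpa using hp
  rw [show (3 / 2 : ℝ) = 1 + 1 / 2 by norm_num, Real.rpow_add hE0, Real.rpow_one,
    ← Real.sqrt_eq_rpow] at ht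
  obtain ⟨hgW, hWdd⟩ := ae_codegree_eq_of_integral_mul_codegree_eq hg h01 hE hE0 ht
  have hs : 0 < √E := Real.sqrt_pos.mpr hE0
  set u : α → ℝ := fun x => √(degree μ g x / √E)
  have hgu : ∀ᵐ p ∂μ.prod μ, g p.1 p.2 = u p.1 * u p.2 := by
    filter_upwards [hgW, hWdd, h01, ae_prod_sections_mem_Icc h01] with p hgW hWdd h01 hsec
    rw [← Real.sqrt_mul (div_nonneg (degree_mem_Icc hsec.1).1 hs.le), div_mul_div_comm, ← hWdd,
      ← hgW, mul_pow, Real.sq_sqrt hE0.le, Real.mul_self_sqrt hE0.le,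
      mul_div_cancel_left₀ _ hE0.ne',
      Real.sqrt_sq h01.1]
  have hu_int : ∫ x, u x ∂μ = √E := by
    rw [← Real.sqrt_sq (integral_nonneg fun _ => Real.sqrt_nonneg _), sq, ← integral_prod_mul,
      ← integral_congr_ae hgu, hE]
  have hdeg : ∀ᵐ x ∂μ, degree μ g x = √E * u x ^ 2 := by
    filter_upwards [Measure.ae_ae_of_ae_prod h01] with x hx
    rw [Real.sq_sqrt (div_nonneg (degree_mem_Icc hx).1 hs.le), mul_div_cancel₀ _ hs.ne']
  exact exists_indicator_of_ae_eq_mul ((measurable_degree hg).div_const _).sqrt hgu hu_int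
    hs.ne' hdeg

end Graphon

/-- If `t(g) = e(g)^{3/2}` then `g` is a.e. the indicator `1_A(x) 1_A(y)` of a
square, where `A ⊆ [0,1]` has measure `√(e(g))`. -/
theorem upper_boundary_maximizer (g : ℝ → ℝ → ℝ) (hg : IsGraphon g)
    (ht : triangleDensity g = (edgeDensity g) ^ ((3:ℝ)/2)) :
    ∃ A : Set ℝ, MeasurableSet A ∧ A ⊆ Icc (0:ℝ) 1 ∧
      volume A = ENNReal.ofReal (Real.sqrt (edgeDensity g)) ∧
      ∀ᵐ p : ℝ × ℝ ∂(volume.restrict (Icc (0:ℝ) 1 ×ˢ Icc (0:ℝ) 1)),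
        g p.1 p.2 =
          A.indicator (fun _ => (1:ℝ)) p.1 * A.indicator (fun _ => (1:ℝ)) p.2 := by
  obtain ⟨hmeas, hsymm, hrange⟩ := hg
  set μ := volume.restrict (Icc (0:ℝ) 1)
  have : IsProbabilityMeasure μ := ⟨by simp [μ]⟩
  have hμμ : μ.prod μ = volume.restrict (Icc (0:ℝ) 1 ×ˢ Icc (0:ℝ) 1) := by
    rw [Measure.prod_restrict]; rfl
  have hsquare : ∀ᵐ p ∂μ.prod μ, p.1 ∈ Icc (0:ℝ) 1 ∧ p.2 ∈ Icc (0:ℝ) 1 :=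
    hμμ ▸ ae_restrict_mem (measurableSet_Icc.prod measurableSet_Icc)
  have h01 := hsquare.mono fun p hp => hrange _ hp.1 _ hp.2
  have hE : ∫ p, g p.1 p.2 ∂μ.prod μ = edgeDensity g :=
    (Graphon.integral_degree hmeas h01).symm
  rw [triangleDensity, Graphon.integral_triangle_eq hmeas
    (hsquare.mono fun p hp => hsymm _ hp.2 _ hp.1) h01] at ht
  obtain ⟨A, hA, hμA, hgA⟩ :=
    Graphon.exists_indicator_of_integral_mul_codegree_eq hmeas h01 hE ht
  refine ⟨A ∩ Icc 0 1, hA.inter measurableSet_Icc, inter_subset_right, ?_, ?_⟩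
  · rw [← Measure.restrict_apply hA, hμA]
  · rw [← hμμ]
    filter_upwards [hgA, hsquare] with p hp ⟨h1, h2⟩
    rw [hp, inter_comm, ← indicator_indicator, indicator_of_mem h1,
      indicator_of_mem h2]
end
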